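/- arXiv:2001.07521 — 3 statements merged into one kernel-verified Lean document; each statement's English description precedes it below -/
import Mathlib

section
/- In a Euclidean Hurwitz algebra, suppose u, v, w are unit vectors such that {1, u, v, u·v, w} is an orthonormal set. Then the eight vectors 1, u, v, u·v, w, u·w, v·w, (u·v)·w form an orthonormal set. -/
/-!
Polarizing `‖x y‖ = ‖x‖ ‖y‖` gives `⟪x y, x z⟫ = ‖x‖² ⟪y, z⟫`, `⟪x z, y z⟫ = ⟪x, y⟫ ‖z‖²` and the
exchange identity `⟪a b, c d⟫ + ⟪c b, a d⟫ = 2 ⟪a, c⟫ ⟪b, d⟫`. With `d = 1` (or `c = 1`) the latter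
says that left and right multiplications by a vector orthogonal to `1` are skew-adjoint, and that
two orthogonal such vectors anticommute.

Right multiplication by the unit vector `w` is an isometry, so `w, u w, v w, (u v) w` is orthonormal.
Since it is also skew-adjoint, `⟪x, y w⟫` is antisymmetric in `x, y ∈ {1, u, v, u v}`, which
leaves the three products `⟪v, u w⟫`, `⟪u v, u w⟫`, `⟪u v, v w⟫` to be computed.
-/

open RealInnerProductSpace

theorem Orthonormal.fin_append {𝕜 E : Type*} [RCLike 𝕜] [NormedAddCommGroup E]
    [InnerProductSpace 𝕜 E] {m n : ℕ} {f : Fin m → E} {g : Fin n → E}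
    (hf : Orthonormal 𝕜 f) (hg : Orthonormal 𝕜 g) (hfg : ∀ i j, inner 𝕜 (f i) (g j) = 0) :
    Orthonormal 𝕜 (Fin.append f g) := by
  rw [orthonormal_iff_ite] at hf hg ⊢
  intro i j
  refine Fin.addCases (fun i => ?_) (fun i => ?_) i <;>
    refine Fin.addCases (fun j => ?_) (fun j => ?_) j
  · simp [hf]
  · simp [hfg, Fin.ext_iff]
    omega
  · simp [inner_eq_zero_symm.mp (hfg j i), Fin.ext_iff]
    omega
  · simp [hg]

section

variable {A : Type*} [NormedAddCommGroup A] [InnerProductSpace ℝ A] {mul : A →ₗ[ℝ] A →ₗ[ℝ] A}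

theorem inner_mul_mul_same_left (hmon : ∀ x y, ‖mul x y‖ = ‖x‖ * ‖y‖) (x y z : A) :
    ⟪mul x y, mul x z⟫ = ‖x‖ ^ 2 * ⟪y, z⟫ := by
  have h := congrArg (· ^ 2) (hmon x (y + z))
  simp only [map_add, norm_add_sq_real, hmon, mul_pow] at h
  linear_combination h / 2

theorem inner_mul_mul_same_right (hmon : ∀ x y, ‖mul x y‖ = ‖x‖ * ‖y‖) (x y z : A) :
    ⟪mul x z, mul y z⟫ = ⟪x, y⟫ * ‖z‖ ^ 2 := by
  have h := congrArg (· ^ 2) (hmon (x + y) z)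
  simp only [map_add, LinearMap.add_apply, norm_add_sq_real, hmon, mul_pow] at h
  linear_combination h / 2

theorem inner_mul_mul_add_inner_mul_mul (hmon : ∀ x y, ‖mul x y‖ = ‖x‖ * ‖y‖) (a b c d : A) :
    ⟪mul a b, mul c d⟫ + ⟪mul c b, mul a d⟫ = 2 * ⟪a, c⟫ * ⟪b, d⟫ := by
  have h := inner_mul_mul_same_left hmon (a + c) b d
  simp only [map_add, LinearMap.add_apply, inner_add_left, inner_add_right,
    inner_mul_mul_same_left hmon, norm_add_sq_real] at h
  linear_combination h

variable {e : A}

theorem inner_mul_left_eq_neg (hmon : ∀ x y, ‖mul x y‖ = ‖x‖ * ‖y‖) (hul : ∀ x, mul e x = x)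
    {x : A} (hx : ⟪x, e⟫ = 0) (y z : A) : ⟪mul x y, z⟫ = -⟪y, mul x z⟫ := by
  have h := inner_mul_mul_add_inner_mul_mul hmon x y e z
  rw [hul, hul, hx] at h
  linarith

theorem inner_mul_right_eq_neg (hmon : ∀ x y, ‖mul x y‖ = ‖x‖ * ‖y‖) (hur : ∀ x, mul x e = x)
    {y : A} (hy : ⟪y, e⟫ = 0) (x z : A) : ⟪mul x y, z⟫ = -⟪x, mul z y⟫ := by
  have h := inner_mul_mul_add_inner_mul_mul hmon x y z e
  rw [hur, hur, hy, real_inner_comm x] at h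
  linarith

theorem mul_comm_eq_neg_of_inner_eq_zero (hmon : ∀ x y, ‖mul x y‖ = ‖x‖ * ‖y‖)
    (hul : ∀ x, mul e x = x) (hur : ∀ x, mul x e = x) {x y : A} (hx : ⟪x, e⟫ = 0)
    (hy : ⟪y, e⟫ = 0) (hxy : ⟪x, y⟫ = 0) : mul y x = -mul x y := by
  refine ext_inner_right ℝ fun z => ?_
  have h := inner_mul_mul_add_inner_mul_mul hmon y z x e
  rw [hur, hur, real_inner_comm x y, hxy, real_inner_comm x, real_inner_comm y] at h
  rw [inner_neg_left, inner_mul_left_eq_neg hmon hul hy, inner_mul_left_eq_neg hmon hul hx]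
  linarith

theorem Orthonormal.mul_right (hmon : ∀ x y, ‖mul x y‖ = ‖x‖ * ‖y‖) {ι : Type*}
    {f : ι → A} (hf : Orthonormal ℝ f) {w : A} (hw : ‖w‖ = 1) :
    Orthonormal ℝ fun i => mul (f i) w := by
  classical
  rw [orthonormal_iff_ite] at hf ⊢
  intro i j
  rw [inner_mul_mul_same_right hmon, hf, hw, one_pow, mul_one]

theorem inner_mul_right_eq_zero_of_orthonormal (hmon : ∀ x y, ‖mul x y‖ = ‖x‖ * ‖y‖)
    (hul : ∀ x, mul e x = x) (hur : ∀ x, mul x e = x) {u v w : A}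
    (h : Orthonormal ℝ ![e, u, v, mul u v, w]) (i j : Fin 4) :
    ⟪![e, u, v, mul u v] i, mul (![e, u, v, mul u v] j) w⟫ = 0 := by
  have o := orthonormal_iff_ite.mp h
  have hue : ⟪u, e⟫ = 0 := by simpa using o 1 0
  have hve : ⟪v, e⟫ = 0 := by simpa using o 2 0
  have hwe : ⟪w, e⟫ = 0 := by simpa using o 4 0
  have huw : ⟪u, w⟫ = 0 := by simpa using o 1 4
  have hvw : ⟪v, w⟫ = 0 := by simpa using o 2 4
  have hwv : ⟪w, v⟫ = 0 := by simpa using o 4 2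
  have hwp : ⟪w, mul u v⟫ = 0 := by simpa using o 4 3
  have hpw : ⟪mul u v, w⟫ = 0 := by simpa using o 3 4
  have anti : ∀ x y, ⟪x, mul y w⟫ = -⟪y, mul x w⟫ := fun x y => by
    rw [real_inner_comm, inner_mul_right_eq_neg hmon hur hwe]
  have hvu : ⟪v, mul u w⟫ = 0 := by
    rw [real_inner_comm, inner_mul_left_eq_neg hmon hul hue, hwp, neg_zero]
  have hpu : ⟪mul u v, mul u w⟫ = 0 := by
    rw [inner_mul_mul_same_left hmon, hvw, mul_zero]
  have hpv : ⟪mul u v, mul v w⟫ = 0 := by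
    rw [mul_comm_eq_neg_of_inner_eq_zero hmon hul hur hwe hve hwv, inner_neg_right,
      inner_mul_mul_same_right hmon, huw, zero_mul, neg_zero]
  have below : ∀ i j : Fin 4, j < i →
      ⟪![e, u, v, mul u v] i, mul (![e, u, v, mul u v] j) w⟫ = 0 := by
    intro i j hji
    fin_cases i <;> fin_cases j <;> simp [hul, huw, hvw, hpw, hvu, hpu, hpv] at hji ⊢
  rcases lt_trichotomy j i with hji | rfl | hij
  · exact below i j hji
  · linarith [anti (![e, u, v, mul u v] j) (![e, u, v, mul u v] j)]
  · rw [anti, below j i hij, neg_zero]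

end

theorem stmt_9_general {A : Type*} [NormedAddCommGroup A] [InnerProductSpace ℝ A]
    (mul : A →ₗ[ℝ] A →ₗ[ℝ] A) (e : A)
    (hul : ∀ x, mul e x = x) (hur : ∀ x, mul x e = x)
    (hmon : ∀ x y, ‖mul x y‖ = ‖x‖ * ‖y‖)
    (u v w : A)
    (h5 : Orthonormal ℝ ![e, u, v, mul u v, w]) :
    Orthonormal ℝ
      ![e, u, v, mul u v, w, mul u w, mul v w, mul (mul u v) w] := by
  have hquat : Orthonormal ℝ ![e, u, v, mul u v] := by
    convert h5.comp Fin.castSucc (Fin.castSucc_injective 4) using 1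
    ext i
    fin_cases i <;> rfl
  have hw : ‖w‖ = 1 := by simpa using h5.1 4
  have hsplit : ![e, u, v, mul u v, w, mul u w, mul v w, mul (mul u v) w] =
      Fin.append ![e, u, v, mul u v] fun i => mul (![e, u, v, mul u v] i) w := by
    ext i
    fin_cases i <;> simp [Fin.append, Fin.addCases, hul]
  rw [hsplit]
  exact hquat.fin_append (hquat.mul_right hmon hw)
    (inner_mul_right_eq_zero_of_orthonormal hmon hul hur h5)

theorem stmt_9 {A : Type*} [NormedAddCommGroup A] [InnerProductSpace ℝ A]
    (mul : A →ₗ[ℝ] A →ₗ[ℝ] A) (e : A) (he : ‖e‖ = 1)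
    (hul : ∀ x, mul e x = x) (hur : ∀ x, mul x e = x)
    (hmon : ∀ x y, ‖mul x y‖ = ‖x‖ * ‖y‖)
    (u v w : A)
    (h5 : Orthonormal ℝ ![e, u, v, mul u v, w]) :
    Orthonormal ℝ
      ![e, u, v, mul u v, w, mul u w, mul v w, mul (mul u v) w] :=
  stmt_9_general mul e hul hur hmon u v w h5
end

section
/- In a Euclidean Hurwitz algebra, if x, y, w are orthonormal vectors each orthogonal to the unit element 1, and x · y is orthogonal to w, then x · (y · w) = -((x · y) · w). -/
/-!
Polarizing `‖a b‖ = ‖a‖ ‖b‖` gives the exchange identity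
`⟪a c, b d⟫ + ⟪a d, b c⟫ = 2 ⟪a, b⟫ ⟪c, d⟫`. Putting the unit into it shows that left and right
multiplication by an element orthogonal to `1` are skew-adjoint, and that such elements
anticommute when they are orthogonal to each other. Combining skew-adjointness with the exchange
identity gives `x (y w) = -(y (x w))` and `(x y) w = -((x w) y)`, and the hypothesis `x y ⊥ w`
makes `x w` orthogonal to `y` and `1`, so `(x w) y = -(y (x w))`.
-/

namespace HurwitzAlgebra

open RealInnerProductSpace

variable {A : Type*} [NormedAddCommGroup A] [InnerProductSpace ℝ A] {mul : A →ₗ[ℝ] A →ₗ[ℝ] A}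
  {e : A}

theorem inner_mul_mul_left (hmon : ∀ x y, ‖mul x y‖ = ‖x‖ * ‖y‖) (a b c : A) :
    ⟪mul a b, mul a c⟫ = ‖a‖ ^ 2 * ⟪b, c⟫ := by
  have h := real_inner_eq_norm_add_mul_self_sub_norm_mul_self_sub_norm_mul_self_div_two
    (mul a b) (mul a c)
  rw [← map_add, hmon, hmon, hmon] at h
  rw [h, real_inner_eq_norm_add_mul_self_sub_norm_mul_self_sub_norm_mul_self_div_two b c]
  ring

theorem inner_mul_mul_right (hmon : ∀ x y, ‖mul x y‖ = ‖x‖ * ‖y‖) (a b c : A) :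
    ⟪mul a c, mul b c⟫ = ⟪a, b⟫ * ‖c‖ ^ 2 := by
  have h := real_inner_eq_norm_add_mul_self_sub_norm_mul_self_sub_norm_mul_self_div_two
    (mul a c) (mul b c)
  rw [← LinearMap.add_apply, ← map_add, hmon, hmon, hmon] at h
  rw [h, real_inner_eq_norm_add_mul_self_sub_norm_mul_self_sub_norm_mul_self_div_two a b]
  ring

theorem inner_mul_mul_add_inner_mul_mul (hmon : ∀ x y, ‖mul x y‖ = ‖x‖ * ‖y‖) (a b c d : A) :
    ⟪mul a c, mul b d⟫ + ⟪mul a d, mul b c⟫ = 2 * ⟪a, b⟫ * ⟪c, d⟫ := by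
  have h := inner_mul_mul_right hmon a b (c + d)
  rw [map_add, map_add, inner_add_left, inner_add_right, inner_add_right, norm_add_sq_real,
    inner_mul_mul_right hmon, inner_mul_mul_right hmon] at h
  linear_combination h

theorem inner_mul_add_inner_mul_swap (hmon : ∀ x y, ‖mul x y‖ = ‖x‖ * ‖y‖)
    (hul : ∀ x, mul e x = x) (a b c : A) :
    ⟪mul a b, c⟫ + ⟪mul a c, b⟫ = 2 * ⟪a, e⟫ * ⟪b, c⟫ := by
  simpa only [hul] using inner_mul_mul_add_inner_mul_mul hmon a e b c

theorem inner_mul_add_inner_mul_swap' (hmon : ∀ x y, ‖mul x y‖ = ‖x‖ * ‖y‖)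
    (hur : ∀ x, mul x e = x) (a b c : A) :
    ⟪mul a b, c⟫ + ⟪a, mul c b⟫ = 2 * ⟪a, c⟫ * ⟪b, e⟫ := by
  simpa only [hur] using inner_mul_mul_add_inner_mul_mul hmon a c b e

theorem mul_self (hmon : ∀ x y, ‖mul x y‖ = ‖x‖ * ‖y‖) (hul : ∀ x, mul e x = x)
    (hur : ∀ x, mul x e = x) (a : A) :
    mul a a = (2 * ⟪a, e⟫) • a - ‖a‖ ^ 2 • e := by
  refine ext_inner_right ℝ fun c => ?_
  have h := inner_mul_mul_left hmon a c e
  rw [hur, real_inner_comm e] at h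
  rw [inner_sub_left, real_inner_smul_left, real_inner_smul_left]
  linear_combination inner_mul_add_inner_mul_swap hmon hul a a c - h

theorem mul_add_mul_swap (hmon : ∀ x y, ‖mul x y‖ = ‖x‖ * ‖y‖) (hul : ∀ x, mul e x = x)
    (hur : ∀ x, mul x e = x) (a b : A) :
    mul a b + mul b a = (2 * ⟪a, e⟫) • b + (2 * ⟪b, e⟫) • a - (2 * ⟪a, b⟫) • e := by
  have h := mul_self hmon hul hur (a + b)
  simp only [map_add, LinearMap.add_apply] at h
  rw [mul_self hmon hul hur a, mul_self hmon hul hur b, inner_add_left, norm_add_sq_real] at h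
  linear_combination (norm := module) h

theorem mul_swap_of_inner_eq_zero (hmon : ∀ x y, ‖mul x y‖ = ‖x‖ * ‖y‖)
    (hul : ∀ x, mul e x = x) (hur : ∀ x, mul x e = x) {a b : A}
    (ha : ⟪a, e⟫ = 0) (hb : ⟪b, e⟫ = 0) (hab : ⟪a, b⟫ = 0) :
    mul b a = -mul a b := by
  have h := mul_add_mul_swap hmon hul hur a b
  rw [ha, hb, hab] at h
  linear_combination (norm := module) h

theorem mul_mul_left_anticomm (hmon : ∀ x y, ‖mul x y‖ = ‖x‖ * ‖y‖) (hul : ∀ x, mul e x = x)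
    {a b : A} (ha : ⟪a, e⟫ = 0) (hb : ⟪b, e⟫ = 0) (hab : ⟪a, b⟫ = 0) (c : A) :
    mul a (mul b c) = -mul b (mul a c) := by
  refine ext_inner_right ℝ fun d => ?_
  have h1 := inner_mul_add_inner_mul_swap hmon hul a (mul b c) d
  have h2 := inner_mul_mul_add_inner_mul_mul hmon a b d c
  have h3 := inner_mul_add_inner_mul_swap hmon hul b (mul a c) d
  rw [ha] at h1
  rw [hab] at h2
  rw [hb, real_inner_comm (mul a c) (mul b d)] at h3
  rw [inner_neg_left]
  linear_combination h1 - h2 + h3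

theorem mul_mul_right_anticomm (hmon : ∀ x y, ‖mul x y‖ = ‖x‖ * ‖y‖) (hur : ∀ x, mul x e = x)
    {b c : A} (hb : ⟪b, e⟫ = 0) (hc : ⟪c, e⟫ = 0) (hbc : ⟪b, c⟫ = 0) (a : A) :
    mul (mul a b) c = -mul (mul a c) b := by
  refine ext_inner_right ℝ fun d => ?_
  have h1 := inner_mul_add_inner_mul_swap' hmon hur (mul a b) c d
  have h2 := inner_mul_mul_add_inner_mul_mul hmon a d b c
  have h3 := inner_mul_add_inner_mul_swap' hmon hur (mul a c) b d
  rw [hc] at h1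
  rw [hbc] at h2
  rw [hb] at h3
  rw [inner_neg_left]
  linear_combination h1 - h2 + h3

end HurwitzAlgebra

open RealInnerProductSpace HurwitzAlgebra in
theorem stmt_11_general {A : Type*} [NormedAddCommGroup A] [InnerProductSpace ℝ A]
    (mul : A →ₗ[ℝ] A →ₗ[ℝ] A) (e : A)
    (hul : ∀ x, mul e x = x) (hur : ∀ x, mul x e = x)
    (hmon : ∀ x y, ‖mul x y‖ = ‖x‖ * ‖y‖)
    (x y w : A)
    (hxe : (inner ℝ x e) = 0) (hye : (inner ℝ y e) = 0) (hwe : (inner ℝ w e) = 0)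
    (hxy : (inner ℝ x y) = 0) (hxw : (inner ℝ x w) = 0) (hyw : (inner ℝ y w) = 0)
    (hxyw : (inner ℝ (mul x y) w) = 0) :
    mul x (mul y w) = -(mul (mul x y) w) := by
  have hxw_e : ⟪mul x w, e⟫ = 0 := by
    have h := inner_mul_add_inner_mul_swap hmon hul x w e
    rw [hur, hxe, hxw] at h
    linarith
  have hxw_y : ⟪mul x w, y⟫ = 0 := by
    have h := inner_mul_add_inner_mul_swap hmon hul x w y
    rw [hxe, hxyw] at h
    linarith
  rw [mul_mul_left_anticomm hmon hul hxe hye hxy,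
    mul_mul_right_anticomm hmon hur hye hwe hyw,
    mul_swap_of_inner_eq_zero hmon hul hur hye hxw_e (by rwa [real_inner_comm]), neg_neg]

theorem stmt_11 {A : Type*} [NormedAddCommGroup A] [InnerProductSpace ℝ A]
    (mul : A →ₗ[ℝ] A →ₗ[ℝ] A) (e : A) (he : ‖e‖ = 1)
    (hul : ∀ x, mul e x = x) (hur : ∀ x, mul x e = x)
    (hmon : ∀ x y, ‖mul x y‖ = ‖x‖ * ‖y‖)
    (x y w : A) (hx : ‖x‖ = 1) (hy : ‖y‖ = 1) (hw : ‖w‖ = 1)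
    (hxe : (inner ℝ x e) = 0) (hye : (inner ℝ y e) = 0) (hwe : (inner ℝ w e) = 0)
    (hxy : (inner ℝ x y) = 0) (hxw : (inner ℝ x w) = 0) (hyw : (inner ℝ y w) = 0)
    (hxyw : (inner ℝ (mul x y) w) = 0) :
    mul x (mul y w) = -(mul (mul x y) w) :=
  stmt_11_general mul e hul hur hmon x y w hxe hye hwe hxy hxw hyw hxyw
end

section
/- In a Euclidean Hurwitz algebra, if u, v are orthonormal vectors orthogonal to 1, and w is a unit vector orthogonal to each of 1, u, v, u·v, then the product of any two distinct elements of {u·w, v·w, (u·v)·w} lies in {±u, ±v, ±(u·v)}; specifically, (u·w)·(v·w) = -(u·v). -/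
/-!
Polarizing `‖xy‖ = ‖x‖‖y‖` gives the exchange identity `⟪xy, zt⟫ + ⟪xt, zy⟫ = 2⟪x, z⟫⟪y, t⟫`.
Taking one of the four variables to be `1` shows that left and right multiplication by an
imaginary element are skew-adjoint; from this, orthogonal imaginary `a, b` satisfy
`a(bz) = -b(az)` (so `ab = -ba`) and a unit imaginary `a` satisfies `a(az) = -z`.
For a basic triple `(u, v, w)` these laws give `(uv)(vw) = uw`, hence
`⟪(uw)(vw), uv⟫ = -⟪uw, (uv)(vw)⟫ = -1`, which forces `(uw)(vw) = -(uv)` since both sides are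
unit vectors. As `v(uv) = u`, the triple `(v, uv, w)` is again basic, and rotating twice yields
the remaining products.
-/

open scoped RealInnerProductSpace

namespace HurwitzAlgebra

variable {A : Type*} [NormedAddCommGroup A] [InnerProductSpace ℝ A]
  {mul : A →ₗ[ℝ] A →ₗ[ℝ] A} {e : A}

section

variable (hmon : ∀ x y, ‖mul x y‖ = ‖x‖ * ‖y‖)
include hmon

theorem inner_mul_mul_same_right (x z y : A) : ⟪mul x y, mul z y⟫ = ⟪x, z⟫ * ‖y‖ ^ 2 := by
  have hsq : ∀ x y, ‖mul x y‖ ^ 2 = ‖x‖ ^ 2 * ‖y‖ ^ 2 := fun x y => by rw [hmon]; ring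
  have h := hsq (x + z) y
  rw [map_add, LinearMap.add_apply, norm_add_sq_real, norm_add_sq_real, hsq, hsq] at h
  linear_combination h / 2

theorem inner_mul_add_inner_mul_swap_s19 (x y z t : A) :
    ⟪mul x y, mul z t⟫ + ⟪mul x t, mul z y⟫ = 2 * ⟪x, z⟫ * ⟪y, t⟫ := by
  have h := inner_mul_mul_same_right hmon x z (y + t)
  rw [map_add, map_add, inner_add_left, inner_add_right, inner_add_right, norm_add_sq_real,
    inner_mul_mul_same_right hmon x z y, inner_mul_mul_same_right hmon x z t] at h
  linear_combination h

theorem inner_mul_mul_same_left (x y t : A) : ⟪mul x y, mul x t⟫ = ‖x‖ ^ 2 * ⟪y, t⟫ := by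
  have h := inner_mul_add_inner_mul_swap_s19 hmon x y x t
  rw [real_inner_comm (mul x y) (mul x t), real_inner_self_eq_norm_sq] at h
  linear_combination h / 2

section

variable (hul : ∀ x, mul e x = x)
include hul

theorem inner_mul_left_adjoint (x y z : A) :
    ⟪mul x y, z⟫ = 2 * ⟪x, e⟫ * ⟪y, z⟫ - ⟪y, mul x z⟫ := by
  have h := inner_mul_add_inner_mul_swap_s19 hmon x y e z
  rw [hul, hul, real_inner_comm y (mul x z)] at h
  linear_combination h

theorem mul_mul_anticomm {a b : A} (ha : ⟪a, e⟫ = 0) (hb : ⟪b, e⟫ = 0) (hab : ⟪a, b⟫ = 0)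
    (z : A) : mul a (mul b z) = -mul b (mul a z) := by
  refine ext_inner_right ℝ fun y => ?_
  have h := inner_mul_add_inner_mul_swap_s19 hmon a z b y
  rw [real_inner_comm (mul b z) (mul a y), hab] at h
  rw [inner_neg_left, inner_mul_left_adjoint hmon hul a,
    inner_mul_left_adjoint hmon hul b (mul a z), ha, hb]
  linear_combination -h

theorem mul_mul_self_eq_neg {a : A} (ha : ⟪a, e⟫ = 0) (ha1 : ‖a‖ = 1) (z : A) :
    mul a (mul a z) = -z := by
  refine ext_inner_right ℝ fun y => ?_
  rw [inner_mul_left_adjoint hmon hul, inner_mul_mul_same_left hmon, ha, ha1, inner_neg_left]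
  ring

theorem inner_mul_right_factor_eq_zero {a : A} (ha : ⟪a, e⟫ = 0) (b : A) :
    ⟪mul a b, b⟫ = 0 := by
  have h := inner_mul_mul_same_right hmon a e b
  rwa [hul, ha, zero_mul] at h

end

section

variable (hur : ∀ x, mul x e = x)
include hur

theorem inner_mul_right_adjoint (x y z : A) :
    ⟪mul x y, z⟫ = 2 * ⟪x, z⟫ * ⟪y, e⟫ - ⟪x, mul z y⟫ := by
  have h := inner_mul_add_inner_mul_swap_s19 hmon x y z e
  rw [hur, hur] at h
  linear_combination h

theorem inner_mul_left_factor_eq_zero (a : A) {b : A} (hb : ⟪b, e⟫ = 0) :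
    ⟪mul a b, a⟫ = 0 := by
  have h := inner_mul_mul_same_left hmon a b e
  rwa [hur, hb, mul_zero] at h

end

end

structure IsBasicTriple (mul : A →ₗ[ℝ] A →ₗ[ℝ] A) (e u v w : A) : Prop where
  norm_u : ‖u‖ = 1
  norm_v : ‖v‖ = 1
  norm_w : ‖w‖ = 1
  inner_u_unit : ⟪u, e⟫ = 0
  inner_v_unit : ⟪v, e⟫ = 0
  inner_u_v : ⟪u, v⟫ = 0
  inner_w_unit : ⟪w, e⟫ = 0
  inner_w_u : ⟪w, u⟫ = 0
  inner_w_v : ⟪w, v⟫ = 0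
  inner_w_mul : ⟪w, mul u v⟫ = 0

section

variable (hmon : ∀ x y, ‖mul x y‖ = ‖x‖ * ‖y‖) (hul : ∀ x, mul e x = x)
  (hur : ∀ x, mul x e = x)
include hmon hul hur

theorem inner_mul_unit_eq_zero {a b : A} (ha : ⟪a, e⟫ = 0) (hab : ⟪a, b⟫ = 0) :
    ⟪mul a b, e⟫ = 0 := by
  rw [inner_mul_left_adjoint hmon hul, hur, ha, real_inner_comm a b, hab]
  ring

theorem mul_anticomm {a b : A} (ha : ⟪a, e⟫ = 0) (hb : ⟪b, e⟫ = 0) (hab : ⟪a, b⟫ = 0) :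
    mul a b = -mul b a := by
  simpa only [hur] using mul_mul_anticomm hmon hul ha hb hab e

variable {u v : A} (hue : ⟪u, e⟫ = 0) (hve : ⟪v, e⟫ = 0) (huv : ⟪u, v⟫ = 0)
include hue hve huv

theorem mul_mul_mul_cancel_right (hv : ‖v‖ = 1) : mul v (mul u v) = u := by
  rw [mul_anticomm hmon hul hur hue hve huv, map_neg, mul_mul_self_eq_neg hmon hul hve hv,
    neg_neg]

theorem mul_mul_mul_cancel_left (hu : ‖u‖ = 1) : mul (mul u v) u = v := by
  rw [mul_anticomm hmon hul hur (inner_mul_unit_eq_zero hmon hul hur hue huv) hue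
    (inner_mul_left_factor_eq_zero hmon hur u hve), mul_mul_self_eq_neg hmon hul hue hu, neg_neg]

end

namespace IsBasicTriple

variable {u v w : A} (hmon : ∀ x y, ‖mul x y‖ = ‖x‖ * ‖y‖) (hul : ∀ x, mul e x = x)
  (hur : ∀ x, mul x e = x)
include hmon hul hur

theorem rotate (h : IsBasicTriple mul e u v w) : IsBasicTriple mul e v (mul u v) w where
  norm_u := h.norm_v
  norm_v := by rw [hmon, h.norm_u, h.norm_v, one_mul]
  norm_w := h.norm_w
  inner_u_unit := h.inner_v_unit
  inner_v_unit := inner_mul_unit_eq_zero hmon hul hur h.inner_u_unit h.inner_u_v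
  inner_u_v := real_inner_comm _ v ▸ inner_mul_right_factor_eq_zero hmon hul h.inner_u_unit v
  inner_w_unit := h.inner_w_unit
  inner_w_u := h.inner_w_v
  inner_w_v := h.inner_w_mul
  inner_w_mul := by
    rw [mul_mul_mul_cancel_right hmon hul hur h.inner_u_unit h.inner_v_unit h.inner_u_v h.norm_v]
    exact h.inner_w_u

theorem inner_mul_u_w_unit (h : IsBasicTriple mul e u v w) : ⟪mul u w, e⟫ = 0 :=
  inner_mul_unit_eq_zero hmon hul hur h.inner_u_unit (real_inner_comm w u ▸ h.inner_w_u)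

theorem inner_mul_v_w_unit (h : IsBasicTriple mul e u v w) : ⟪mul v w, e⟫ = 0 :=
  inner_mul_unit_eq_zero hmon hul hur h.inner_v_unit (real_inner_comm w v ▸ h.inner_w_v)

theorem mul_mul_mul_eq_neg (h : IsBasicTriple mul e u v w) :
    mul (mul u w) (mul v w) = -mul u v := by
  have huv_e := inner_mul_unit_eq_zero hmon hul hur h.inner_u_unit h.inner_u_v
  have hvw : ⟪v, w⟫ = 0 := real_inner_comm w v ▸ h.inner_w_v
  have huv_w : ⟪mul u v, w⟫ = 0 := real_inner_comm w (mul u v) ▸ h.inner_w_mul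
  have huw : ‖mul u w‖ = 1 := by rw [hmon, h.norm_u, h.norm_w, one_mul]
  have key : mul (mul u v) (mul v w) = mul u w := by
    rw [mul_mul_anticomm hmon hul huv_e h.inner_v_unit
        (inner_mul_right_factor_eq_zero hmon hul h.inner_u_unit v),
      mul_anticomm hmon hul hur huv_e h.inner_w_unit huv_w, map_neg, neg_neg,
      mul_mul_anticomm hmon hul h.inner_v_unit h.inner_w_unit hvw,
      mul_mul_mul_cancel_right hmon hul hur h.inner_u_unit h.inner_v_unit h.inner_u_v h.norm_v,
      mul_anticomm hmon hul hur h.inner_w_unit h.inner_u_unit h.inner_w_u, neg_neg]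
  have hnorm : ‖mul (mul u w) (mul v w)‖ = 1 := by
    rw [hmon, huw, hmon, h.norm_v, h.norm_w, one_mul, one_mul]
  rw [← inner_eq_neg_one_iff_of_norm_eq_one (𝕜 := ℝ) hnorm
      (by rw [hmon, h.norm_u, h.norm_v, one_mul]),
    inner_mul_right_adjoint hmon hur, h.inner_mul_v_w_unit hmon hul hur, key,
    real_inner_self_eq_norm_sq, huw]
  ring

theorem mul_mul_mul_swap_eq (h : IsBasicTriple mul e u v w) :
    mul (mul v w) (mul u w) = mul u v := by
  have horth : ⟪mul v w, mul u w⟫ = 0 := by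
    rw [inner_mul_mul_same_right hmon, real_inner_comm, h.inner_u_v, zero_mul]
  rw [mul_anticomm hmon hul hur (h.inner_mul_v_w_unit hmon hul hur)
    (h.inner_mul_u_w_unit hmon hul hur) horth, h.mul_mul_mul_eq_neg hmon hul hur, neg_neg]

end IsBasicTriple

end HurwitzAlgebra

open HurwitzAlgebra in
theorem stmt_19_general {A : Type*} [NormedAddCommGroup A] [InnerProductSpace ℝ A]
    (mul : A →ₗ[ℝ] A →ₗ[ℝ] A) (e : A)
    (hul : ∀ x, mul e x = x) (hur : ∀ x, mul x e = x)
    (hmon : ∀ x y, ‖mul x y‖ = ‖x‖ * ‖y‖)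
    (u v w : A) (hu : ‖u‖ = 1) (hv : ‖v‖ = 1) (hw : ‖w‖ = 1)
    (hue : (inner ℝ u e : ℝ) = 0) (hve : (inner ℝ v e : ℝ) = 0)
    (huv : (inner ℝ u v : ℝ) = 0)
    (hwe : (inner ℝ w e : ℝ) = 0) (hwu : (inner ℝ w u : ℝ) = 0)
    (hwv : (inner ℝ w v : ℝ) = 0) (hwuv : (inner ℝ w (mul u v) : ℝ) = 0) :
    (∀ a b : A, a ∈ ({mul u w, mul v w, mul (mul u v) w} : Set A) →
        b ∈ ({mul u w, mul v w, mul (mul u v) w} : Set A) → a ≠ b →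
        mul a b ∈ ({u, -u, v, -v, mul u v, -(mul u v)} : Set A)) ∧
    mul (mul u w) (mul v w) = -(mul u v) := by
  have hvuv := mul_mul_mul_cancel_right hmon hul hur hue hve huv hv
  have huvu := mul_mul_mul_cancel_left hmon hul hur hue hve huv hu
  have h : IsBasicTriple mul e u v w := ⟨hu, hv, hw, hue, hve, huv, hwe, hwu, hwv, hwuv⟩
  have h' := h.rotate hmon hul hur
  have h'' : IsBasicTriple mul e (mul u v) u w := by
    simpa only [hvuv] using h'.rotate hmon hul hur
  have e12 := h.mul_mul_mul_eq_neg hmon hul hur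
  have e21 := h.mul_mul_mul_swap_eq hmon hul hur
  have e23 := h'.mul_mul_mul_eq_neg hmon hul hur
  have e32 := h'.mul_mul_mul_swap_eq hmon hul hur
  have e31 := h''.mul_mul_mul_eq_neg hmon hul hur
  have e13 := h''.mul_mul_mul_swap_eq hmon hul hur
  rw [hvuv] at e23 e32
  rw [huvu] at e31 e13
  refine ⟨?_, e12⟩
  intro a b ha hb hab
  simp only [Set.mem_insert_iff, Set.mem_singleton_iff] at ha hb
  rcases ha with rfl | rfl | rfl <;> rcases hb with rfl | rfl | rfl <;>
    first | exact absurd rfl hab | simp [e12, e21, e23, e32, e31, e13]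

theorem stmt_19 {A : Type*} [NormedAddCommGroup A] [InnerProductSpace ℝ A]
    (mul : A →ₗ[ℝ] A →ₗ[ℝ] A) (e : A) (he : ‖e‖ = 1)
    (hul : ∀ x, mul e x = x) (hur : ∀ x, mul x e = x)
    (hmon : ∀ x y, ‖mul x y‖ = ‖x‖ * ‖y‖)
    (u v w : A) (hu : ‖u‖ = 1) (hv : ‖v‖ = 1) (hw : ‖w‖ = 1)
    (hue : (inner ℝ u e : ℝ) = 0) (hve : (inner ℝ v e : ℝ) = 0)
    (huv : (inner ℝ u v : ℝ) = 0)
    (hwe : (inner ℝ w e : ℝ) = 0) (hwu : (inner ℝ w u : ℝ) = 0)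
    (hwv : (inner ℝ w v : ℝ) = 0) (hwuv : (inner ℝ w (mul u v) : ℝ) = 0) :
    (∀ a b : A, a ∈ ({mul u w, mul v w, mul (mul u v) w} : Set A) →
        b ∈ ({mul u w, mul v w, mul (mul u v) w} : Set A) → a ≠ b →
        mul a b ∈ ({u, -u, v, -v, mul u v, -(mul u v)} : Set A)) ∧
    mul (mul u w) (mul v w) = -(mul u v) :=
  stmt_19_general mul e hul hur hmon u v w hu hv hw hue hve huv hwe hwu hwv hwuv
end
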